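/- Let β > 0 and v ∈ L²(∂Ω) with v not H^{N−1}-a.e. zero on ∂Ω. Then the function m ↦ min_{ĥ ∈ H_m(∂Ω)} ∫_{∂Ω} v²/(1+βĥ) dH^{N−1} is strictly decreasing on (0, ∞). -/

import Mathlib

open MeasureTheory Set Filter
open scoped RealInnerProductSpace ENNReal Topology
noncomputable section

abbrev Euc (N : ℕ) := EuclideanSpace ℝ (Fin N)

/-- The (N-1)-dimensional Hausdorff (surface) measure on the boundary of `Ω`. -/
def sm (N : ℕ) (Ω : Set (Euc N)) : Measure (Euc N) :=
  (μH[(N : ℝ) - 1]).restrict (frontier Ω)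

/-- Membership in `H¹(Ω)` (concrete model: function and gradient square integrable). -/
def MemH1 {N : ℕ} (Ω : Set (Euc N)) (v : Euc N → ℝ) : Prop :=
  MemLp v 2 (volume.restrict Ω) ∧ MemLp (fun x => gradient v x) 2 (volume.restrict Ω)

/-- Dirichlet energy `∫_Ω |∇v|²`. -/
def dirE {N : ℕ} (Ω : Set (Euc N)) (v : Euc N → ℝ) : ℝ := ∫ x in Ω, ‖gradient v x‖ ^ 2

/-- Boundary energy `∫_{∂Ω} v²/(1+βh)`. -/
def bdryE {N : ℕ} (Ω : Set (Euc N)) (β : ℝ) (v h : Euc N → ℝ) : ℝ :=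
  ∫ σ, v σ ^ 2 / (1 + β * h σ) ∂(sm N Ω)

/-- The insulation functional `J(v,h)`. -/
def Jfun {N : ℕ} (Ω : Set (Euc N)) (β : ℝ) (v h : Euc N → ℝ) : ℝ :=
  dirE Ω v + β * bdryE Ω β v h

/-- The Rayleigh quotient `F(v,h)`. -/
def Rq {N : ℕ} (Ω : Set (Euc N)) (β : ℝ) (v h : Euc N → ℝ) : ℝ :=
  Jfun Ω β v h / ∫ x in Ω, v x ^ 2

/-- `h ∈ H_m(∂Ω)`: nonnegative, integrable on `∂Ω`, with total mass `m`. -/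
def memHm {N : ℕ} (Ω : Set (Euc N)) (m : ℝ) (h : Euc N → ℝ) : Prop :=
  (∀ σ, 0 ≤ h σ) ∧ Integrable h (sm N Ω) ∧ (∫ σ, h σ ∂(sm N Ω)) = m

/-- The optimal insulation eigenvalue `λ_m`. -/
def lam {N : ℕ} (Ω : Set (Euc N)) (β m : ℝ) : ℝ :=
  sInf {t | ∃ v h, MemH1 Ω v ∧ ¬ v =ᵐ[volume.restrict Ω] 0 ∧ memHm Ω m h ∧ t = Rq Ω β v h}

/-- The first Robin eigenvalue `λ^R(β)`. -/
def lamR {N : ℕ} (Ω : Set (Euc N)) (β : ℝ) : ℝ :=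
  sInf {t | ∃ v, MemH1 Ω v ∧ ¬ v =ᵐ[volume.restrict Ω] 0 ∧
    t = (dirE Ω v + β * ∫ σ, v σ ^ 2 ∂(sm N Ω)) / ∫ x in Ω, v x ^ 2}

/-- The first nontrivial Neumann eigenvalue `λ^N`. -/
def lamN {N : ℕ} (Ω : Set (Euc N)) : ℝ :=
  sInf {t | ∃ v, MemH1 Ω v ∧ ¬ v =ᵐ[volume.restrict Ω] 0 ∧ (∫ x in Ω, v x) = 0 ∧
    t = dirE Ω v / ∫ x in Ω, v x ^ 2}

/-- The first Dirichlet eigenvalue `λ^D`. -/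
def lamD {N : ℕ} (Ω : Set (Euc N)) : ℝ :=
  sInf {t | ∃ v, MemH1 Ω v ∧ ¬ v =ᵐ[volume.restrict Ω] 0 ∧ (∀ σ ∈ frontier Ω, v σ = 0) ∧
    t = dirE Ω v / ∫ x in Ω, v x ^ 2}

/-- Radial function about the center `x0`. -/
def IsRadial {N : ℕ} (x0 : Euc N) (u : Euc N → ℝ) : Prop :=
  ∀ x y, ‖x - x0‖ = ‖y - x0‖ → u x = u y

/-!
Fix a set `A` of positive finite measure on which `v² ≥ c > 0`. If `g ≥ 0` has mass `m₁ < m₂`,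
then `g + ((m₂ - m₁) / |A|) 𝟙_A` has mass `m₂`. By Markov's inequality `g < M := 2 m₁ / |A|` on
at least half of `A`, and there the integrand `v² / (1 + β g)` drops by a constant `κ > 0`
depending only on `c, β, M` and `m₂ - m₁`. Hence every energy at mass `m₁` is beaten by at least
`κ |A| / 2` by an energy at mass `m₂`; this uniform gain survives taking infima, so no minimiser
is needed.
-/

namespace MeasureTheory

variable {α : Type*} [MeasurableSpace α] {μ : Measure α}

theorem Integrable.exists_measurableSet_le_norm {E : Type*} [NormedAddCommGroup E] {f : α → E}
    (hf : Integrable f μ) (hf0 : ¬ f =ᵐ[μ] 0) :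
    ∃ c > 0, ∃ A, MeasurableSet A ∧ μ A ≠ 0 ∧ μ A ≠ ∞ ∧ ∀ x ∈ A, c ≤ ‖f x‖ := by
  set w := hf.1.mk f
  have hfw : f =ᵐ[μ] w := hf.1.ae_eq_mk
  have hw0 : μ (⋃ n : ℕ, {x | 1 / ((n : ℝ) + 1) ≤ ‖w x‖}) ≠ 0 := by
    refine fun h ↦ hf0 (hfw.trans ?_)
    refine measure_mono_null (fun x (hx : w x ≠ 0) ↦ mem_iUnion.2 ?_) h
    obtain ⟨n, hn⟩ := exists_nat_one_div_lt (norm_pos_iff.2 hx)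
    exact ⟨n, hn.le⟩
  obtain ⟨n, hn⟩ := exists_measure_pos_of_not_measure_iUnion_null hw0
  set c : ℝ := 1 / ((n : ℝ) + 1)
  -- cutting out a measurable null hull of `{f ≠ w}` makes the bound hold at every point of `A`
  refine ⟨c, by positivity, {x | c ≤ ‖w x‖} \ toMeasurable μ {x | f x ≠ w x}, ?_, ?_, ?_, ?_⟩
  · exact (measurableSet_le measurable_const hf.1.stronglyMeasurable_mk.norm.measurable).diff
      (measurableSet_toMeasurable _ _)
  · rw [measure_sdiff_null (by rwa [measure_toMeasurable, ← ae_iff])]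
    exact hn.ne'
  · exact (measure_lt_top_of_subset sdiff_subset
      ((hf.congr hfw).measure_norm_ge_lt_top (by positivity)).ne).ne
  · rintro x ⟨hcx, hx⟩
    have hfx : f x = w x := not_not.1 fun h ↦ hx (subset_toMeasurable _ _ h)
    rwa [hfx]

end MeasureTheory

theorem le_div_one_add_mul_sub_div_one_add_mul {β b c M x p : ℝ} (hβ : 0 < β) (hb : 0 < b)
    (hc : 0 ≤ c) (hx : 0 ≤ x) (hxM : x ≤ M) (hcp : c ≤ p) :
    c * (β * b) / ((1 + β * M) * (1 + β * M + β * b)) ≤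
      p / (1 + β * x) - p / (1 + β * (x + b)) := by
  have hdiff : p / (1 + β * x) - p / (1 + β * (x + b))
      = p * (β * b) / ((1 + β * x) * (1 + β * x + β * b)) := by
    rw [mul_add, ← add_assoc]
    field_simp
    ring
  rw [hdiff]
  have hp : 0 ≤ p := hc.trans hcp
  have hM : 0 ≤ M := hx.trans hxM
  have hβx : β * x ≤ β * M := mul_le_mul_of_nonneg_left hxM hβ.le
  gcongr

section InsulationEnergy

variable {α : Type*} [MeasurableSpace α] {μ : Measure α} {β : ℝ} {v g : α → ℝ}

def insulationEnergies (μ : Measure α) (β : ℝ) (v : α → ℝ) (m : ℝ) : Set ℝ :=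
  {t | ∃ g : α → ℝ, (∀ σ, 0 ≤ g σ) ∧ Integrable g μ ∧
    (∫ σ, g σ ∂μ) = m ∧ t = ∫ σ, v σ ^ 2 / (1 + β * g σ) ∂μ}

theorem integrable_sq_div_one_add_mul (hv : Integrable (fun σ ↦ v σ ^ 2) μ) (hβ : 0 ≤ β)
    (hg0 : ∀ σ, 0 ≤ g σ) (hg : AEMeasurable g μ) :
    Integrable (fun σ ↦ v σ ^ 2 / (1 + β * g σ)) μ := by
  refine hv.mono
    (hv.1.aemeasurable.div (aemeasurable_const.add (hg.const_mul β))).aestronglyMeasurable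
    (ae_of_all _ fun σ ↦ ?_)
  have hσ : 1 ≤ 1 + β * g σ := le_add_of_nonneg_right (mul_nonneg hβ (hg0 σ))
  rw [Real.norm_of_nonneg (by positivity), Real.norm_of_nonneg (by positivity)]
  exact div_le_self (sq_nonneg _) hσ

theorem integral_sq_div_one_add_mul_add_indicator_le (hβ : 0 < β) {b c M : ℝ} (hb : 0 < b)
    (hc : 0 ≤ c) (hM : 0 < M) (hv : Integrable (fun σ ↦ v σ ^ 2) μ) {A : Set α}
    (hA : MeasurableSet A) (hAfin : μ A ≠ ∞) (hcA : ∀ σ ∈ A, c ≤ v σ ^ 2)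
    (hg0 : ∀ σ, 0 ≤ g σ) (hg : Integrable g μ) :
    c * (β * b) / ((1 + β * M) * (1 + β * M + β * b)) * (μ.real A - (∫ σ, g σ ∂μ) / M) +
        ∫ σ, v σ ^ 2 / (1 + β * (g σ + A.indicator (fun _ ↦ b) σ)) ∂μ ≤
      ∫ σ, v σ ^ 2 / (1 + β * g σ) ∂μ := by
  set κ := c * (β * b) / ((1 + β * M) * (1 + β * M + β * b))
  set g' := fun σ ↦ g σ + A.indicator (fun _ ↦ b) σ
  set B := A \ toMeasurable μ {σ | M ≤ g σ}
  have hg'0 : ∀ σ, 0 ≤ g' σ := fun σ ↦ add_nonneg (hg0 σ) (indicator_nonneg (fun _ _ ↦ hb.le) σ)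
  have hint₁ := integrable_sq_div_one_add_mul hv hβ.le hg0 hg.aemeasurable
  have hint₂ := integrable_sq_div_one_add_mul hv hβ.le hg'0
    (hg.add ((integrableOn_const hAfin).integrable_indicator hA)).aemeasurable
  have hdrop : ∀ σ, 0 ≤ v σ ^ 2 / (1 + β * g σ) - v σ ^ 2 / (1 + β * g' σ) := fun σ ↦ by
    have hβg := mul_nonneg hβ.le (hg0 σ)
    have hβg' : β * g σ ≤ β * g' σ := mul_le_mul_of_nonneg_left
      (le_add_of_nonneg_right (indicator_nonneg (fun _ _ ↦ hb.le) σ)) hβ.le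
    exact sub_nonneg.2 (div_le_div_of_nonneg_left (sq_nonneg _) (by positivity) (by linarith))
  have hdropB : ∀ σ ∈ B, κ ≤ v σ ^ 2 / (1 + β * g σ) - v σ ^ 2 / (1 + β * g' σ) := by
    rintro σ ⟨hσA, hσM⟩
    have hgM : g σ ≤ M := (not_le.1 fun h ↦ hσM (subset_toMeasurable _ _ h)).le
    simp only [g', indicator_of_mem hσA]
    exact le_div_one_add_mul_sub_div_one_add_mul hβ hb hc (hg0 σ) hgM (hcA σ hσA)
  have hB : μ.real A - (∫ σ, g σ ∂μ) / M ≤ μ.real B := by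
    have hlarge : μ (toMeasurable μ {σ | M ≤ g σ}) ≠ ∞ := by
      rw [measure_toMeasurable]; exact (hg.measure_ge_lt_top hM).ne
    have hsdiff := le_measureReal_sdiff (s₁ := A) hlarge
    rw [measureReal_def (s := toMeasurable _ _), measure_toMeasurable, ← measureReal_def] at hsdiff
    have hMarkov : μ.real {σ | M ≤ g σ} ≤ (∫ σ, g σ ∂μ) / M := by
      rw [le_div_iff₀' hM]; exact mul_meas_ge_le_integral_of_nonneg (ae_of_all _ hg0) hg M
    linarith
  have hκ : 0 ≤ κ := by positivity
  have hgain : κ * (μ.real A - (∫ σ, g σ ∂μ) / M) ≤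
      ∫ σ, (v σ ^ 2 / (1 + β * g σ) - v σ ^ 2 / (1 + β * g' σ)) ∂μ :=
    calc κ * (μ.real A - (∫ σ, g σ ∂μ) / M) ≤ κ * μ.real B := by gcongr
      _ ≤ ∫ σ in B, (v σ ^ 2 / (1 + β * g σ) - v σ ^ 2 / (1 + β * g' σ)) ∂μ :=
        setIntegral_ge_of_const_le_real (hA.diff (measurableSet_toMeasurable _ _))
          (measure_lt_top_of_subset sdiff_subset hAfin).ne hdropB (hint₁.sub hint₂).integrableOn
      _ ≤ _ := setIntegral_le_integral (hint₁.sub hint₂) (ae_of_all _ hdrop)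
  rw [integral_sub hint₁ hint₂] at hgain
  linarith

theorem insulationEnergies_bddBelow (hβ : 0 ≤ β) (m : ℝ) :
    BddBelow (insulationEnergies μ β v m) := by
  refine ⟨0, ?_⟩
  rintro t ⟨g, hg0, -, -, rfl⟩
  exact integral_nonneg fun σ ↦ div_nonneg (sq_nonneg _) (by have := hg0 σ; positivity)

theorem add_indicator_mem_insulationEnergies {A : Set α} (hA : MeasurableSet A) (hAfin : μ A ≠ ∞)
    {b m : ℝ} (hb : 0 ≤ b) (hg0 : ∀ σ, 0 ≤ g σ) (hg : Integrable g μ)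
    (hm : ∫ σ, g σ ∂μ + b * μ.real A = m) :
    ∫ σ, v σ ^ 2 / (1 + β * (g σ + A.indicator (fun _ ↦ b) σ)) ∂μ ∈
      insulationEnergies μ β v m := by
  have hind : Integrable (A.indicator fun _ ↦ b) μ :=
    (integrableOn_const hAfin).integrable_indicator hA
  refine ⟨_, fun σ ↦ add_nonneg (hg0 σ) (indicator_nonneg (fun _ _ ↦ hb) σ), hg.add hind, ?_, rfl⟩
  rw [integral_add hg hind, integral_indicator_const _ hA, smul_eq_mul, mul_comm, hm]

theorem strictAntiOn_sInf_insulationEnergies (hβ : 0 < β) (hv : Integrable (fun σ ↦ v σ ^ 2) μ)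
    (hv0 : ¬ v =ᵐ[μ] 0) :
    StrictAntiOn (fun m ↦ sInf (insulationEnergies μ β v m)) (Ioi 0) := by
  obtain ⟨c, hc, A, hA, hA0, hAfin, hcA⟩ := hv.exists_measurableSet_le_norm
    fun h ↦ hv0 (h.mono fun σ hσ ↦ pow_eq_zero_iff two_ne_zero |>.1 hσ)
  have hcA' : ∀ σ ∈ A, c ≤ v σ ^ 2 := fun σ hσ ↦ by simpa using hcA σ hσ
  have ha : 0 < μ.real A := ENNReal.toReal_pos hA0 hAfin
  intro m₁ (hm₁ : 0 < m₁) m₂ _ h12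
  set M := 2 * m₁ / μ.real A
  set b := (m₂ - m₁) / μ.real A
  set κ := c * (β * b) / ((1 + β * M) * (1 + β * M + β * b))
  have hb : 0 < b := div_pos (by linarith) ha
  have hκ : 0 < κ := by positivity
  have hgain : ∀ t ∈ insulationEnergies μ β v m₁,
      sInf (insulationEnergies μ β v m₂) + κ * (μ.real A / 2) ≤ t := by
    rintro t ⟨g, hg0, hg, hgm, rfl⟩
    have hmass : (∫ σ, g σ ∂μ) / M = μ.real A / 2 := by
      rw [hgm]; simp only [M]; field_simp
    have hle := integral_sq_div_one_add_mul_add_indicator_le (M := M) hβ hb hc.le (by positivity)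
      hv hA hAfin hcA' hg0 hg
    have hmem := add_indicator_mem_insulationEnergies (v := v) (β := β) hA hAfin hb.le hg0 hg
      (m := m₂) (by rw [hgm]; simp only [b]; field_simp; ring)
    have := csInf_le (insulationEnergies_bddBelow hβ.le m₂) hmem
    rw [hmass] at hle
    linarith
  have hne : (insulationEnergies μ β v m₁).Nonempty := ⟨_,
    add_indicator_mem_insulationEnergies (g := 0) hA hAfin (b := m₁ / μ.real A) (by positivity)
      (fun _ ↦ le_rfl) (integrable_zero _ _ _)
      (by simp only [Pi.zero_apply, integral_zero, zero_add]; field_simp)⟩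
  exact (lt_add_of_pos_right _ (by positivity)).trans_le (le_csInf hne hgain)

end InsulationEnergy

theorem min_boundary_energy_strict_anti_general {N : ℕ} (Ω : Set (Euc N)) (β : ℝ) (hβ : 0 < β)
    (v : Euc N → ℝ) (hv : MemLp v 2 (sm N Ω)) (hvne : ¬ v =ᵐ[sm N Ω] 0) :
    StrictAntiOn (fun m : ℝ =>
      sInf {t | ∃ g : Euc N → ℝ, (∀ σ, 0 ≤ g σ) ∧ Integrable g (sm N Ω) ∧
        (∫ σ, g σ ∂(sm N Ω)) = m ∧ t = ∫ σ, v σ ^ 2 / (1 + β * g σ) ∂(sm N Ω)})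
      (Ioi (0 : ℝ)) :=
  strictAntiOn_sInf_insulationEnergies hβ hv.integrable_sq hvne

/-- the minimal boundary energy is strictly decreasing in the mass `m`. -/
theorem min_boundary_energy_strict_anti {N : ℕ} (Ω : Set (Euc N)) (hΩo : IsOpen Ω)
    (hΩb : Bornology.IsBounded Ω) (β : ℝ) (hβ : 0 < β)
    (v : Euc N → ℝ) (hv : MemLp v 2 (sm N Ω)) (hvne : ¬ v =ᵐ[sm N Ω] 0) :
    StrictAntiOn (fun m : ℝ =>
      sInf {t | ∃ g : Euc N → ℝ, (∀ σ, 0 ≤ g σ) ∧ Integrable g (sm N Ω) ∧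
        (∫ σ, g σ ∂(sm N Ω)) = m ∧ t = ∫ σ, v σ ^ 2 / (1 + β * g σ) ∂(sm N Ω)})
      (Ioi (0 : ℝ)) :=
  min_boundary_energy_strict_anti_general Ω β hβ v hv hvne
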